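/- arXiv:2107.11773 — 7 statements merged into one kernel-verified Lean document; each statement's English description precedes it below -/
import Mathlib

section
/- Let K[u] = (d₂/(3a₀) u² + c₁u + c₀) ∂²u/∂x₁² + (2d₂/(3a₀) u + c₁)(∂u/∂x₁)² + β₀ ∂²u/∂x₂² + (d₂u² + d₁u + d₀)∂u/∂x₁ + λ₀ ∂u/∂x₂ + (−2a₀²c₁ + a₀d₁)u² + k₁u with a₀ ≠ 0. Then for all real δ₁, δ₂: K[δ₁e^{−a₀x₁} + δ₂e^{−(a₀x₁ + b₁x₂)}] = (a₀²c₀ − d₀a₀ + k₁)δ₁ e^{−a₀x₁} + (k₁ + β₀b₁² − λ₀b₁ + c₀a₀² − a₀d₀)δ₂ e^{−(a₀x₁ + b₁x₂)}. In particular span{e^{−a₀x₁}, e^{−(a₀x₁+b₁x₂)}} is invariant under K. -/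
/-!
Both exponentials satisfy `∂₁e = -a₀ e`, so every `u` in their span has `∂₁u = -a₀u` and
`∂₁²u = a₀²u`, while along `x₂` only the second exponential varies. Substituting, the cubic terms
of `K[u]` cancel (`d₂a₀/3 + 2d₂a₀/3 - d₂a₀ = 0`), and so do the quadratic ones
(`c₁a₀² + c₁a₀² - d₁a₀ - 2a₀²c₁ + a₀d₁ = 0`); what is left is linear in `u` and acts diagonally.
-/

open Real

theorem deriv_deriv_of_hasDerivAt_mul_sub {f : ℝ → ℝ} {c A : ℝ}
    (hf : ∀ t, HasDerivAt f (c * (f t - A)) t) (t : ℝ) :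
    deriv (fun s => deriv f s) t = c ^ 2 * (f t - A) := by
  have hf' : deriv f = fun s => c * (f s - A) := funext fun s => (hf s).deriv
  have hf'' : HasDerivAt (fun s => c * (f s - A)) (c * (c * (f t - A))) t :=
    ((hf t).sub_const A).const_mul c
  rw [hf', hf''.deriv]
  ring

theorem hasDerivAt_exp_span_fst (δ₁ δ₂ a₀ b₁ y t : ℝ) :
    HasDerivAt (fun x => δ₁ * exp (-a₀ * x) + δ₂ * exp (-(a₀ * x + b₁ * y)))
      (-a₀ * ((δ₁ * exp (-a₀ * t) + δ₂ * exp (-(a₀ * t + b₁ * y))) - 0)) t := by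
  have h₁ := (((hasDerivAt_id t).const_mul (-a₀)).exp).const_mul δ₁
  have h₂ := (((((hasDerivAt_id t).const_mul a₀).add_const (b₁ * y)).neg).exp).const_mul δ₂
  exact (h₁.add h₂).congr_deriv (by simp only [id, Pi.neg_apply]; ring)

theorem hasDerivAt_exp_span_snd (δ₁ δ₂ a₀ b₁ x t : ℝ) :
    HasDerivAt (fun y => δ₁ * exp (-a₀ * x) + δ₂ * exp (-(a₀ * x + b₁ * y)))
      (-b₁ * ((δ₁ * exp (-a₀ * x) + δ₂ * exp (-(a₀ * x + b₁ * t))) - δ₁ * exp (-a₀ * x))) t := by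
  have h₂ := (((((hasDerivAt_id t).const_mul b₁).const_add (a₀ * x)).neg).exp).const_mul δ₂
  exact ((hasDerivAt_const t (δ₁ * exp (-a₀ * x))).add h₂).congr_deriv
    (by simp only [id, Pi.neg_apply]; ring)

theorem stmt1_general (a₀ b₁ c₀ c₁ d₀ d₁ d₂ b0 l0 k₁ : ℝ)
    (K : (ℝ → ℝ → ℝ) → ℝ → ℝ → ℝ)
    (hK : ∀ u : ℝ → ℝ → ℝ, ∀ x y : ℝ,
      K u x y =
        (d₂ / (3 * a₀) * (u x y) ^ 2 + c₁ * u x y + c₀) *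
          deriv (fun x' => deriv (fun x'' => u x'' y) x') x +
        (2 * d₂ / (3 * a₀) * u x y + c₁) * (deriv (fun x' => u x' y) x) ^ 2 +
        b0 * deriv (fun y' => deriv (fun y'' => u x y'') y') y +
        (d₂ * (u x y) ^ 2 + d₁ * u x y + d₀) * deriv (fun x' => u x' y) x +
        l0 * deriv (fun y' => u x y') y +
        (-2 * a₀ ^ 2 * c₁ + a₀ * d₁) * (u x y) ^ 2 + k₁ * u x y) :
    ∀ δ₁ δ₂ : ℝ, ∀ x y : ℝ,
      K (fun x₁ x₂ => δ₁ * exp (-a₀ * x₁) + δ₂ * exp (-(a₀ * x₁ + b₁ * x₂))) x y =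
        (a₀ ^ 2 * c₀ - d₀ * a₀ + k₁) * δ₁ * exp (-a₀ * x) +
        (k₁ + b0 * b₁ ^ 2 - l0 * b₁ + c₀ * a₀ ^ 2 - a₀ * d₀) * δ₂ *
          exp (-(a₀ * x + b₁ * y)) := by
  intro δ₁ δ₂ x y
  have hx := hasDerivAt_exp_span_fst δ₁ δ₂ a₀ b₁ y
  have hy := hasDerivAt_exp_span_snd δ₁ δ₂ a₀ b₁ x
  rw [hK, deriv_deriv_of_hasDerivAt_mul_sub hx, deriv_deriv_of_hasDerivAt_mul_sub hy,
    (hx x).deriv, (hy y).deriv]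
  -- `a₀ ^ 2 / a₀ = a₀` holds also for `a₀ = 0`, by the convention `a₀ / 0 = 0`
  have hcubic : d₂ / (3 * a₀) * a₀ ^ 2 = d₂ * a₀ / 3 := by
    rw [div_mul_eq_mul_div, mul_div_mul_comm, sq, mul_self_div_self]
    ring
  linear_combination 3 * (δ₁ * exp (-a₀ * x) + δ₂ * exp (-(a₀ * x + b₁ * y))) ^ 3 * hcubic

/-- the cubic operator K maps the exponential subspace
`span{e^{−a₀x₁}, e^{−(a₀x₁+b₁x₂)}}` into itself, acting diagonally. -/
theorem stmt1 (a₀ b₁ c₀ c₁ d₀ d₁ d₂ b0 l0 k₁ : ℝ) (ha₀ : a₀ ≠ 0)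
    (K : (ℝ → ℝ → ℝ) → ℝ → ℝ → ℝ)
    (hK : ∀ u : ℝ → ℝ → ℝ, ∀ x y : ℝ,
      K u x y =
        (d₂ / (3 * a₀) * (u x y) ^ 2 + c₁ * u x y + c₀) *
          deriv (fun x' => deriv (fun x'' => u x'' y) x') x +
        (2 * d₂ / (3 * a₀) * u x y + c₁) * (deriv (fun x' => u x' y) x) ^ 2 +
        b0 * deriv (fun y' => deriv (fun y'' => u x y'') y') y +
        (d₂ * (u x y) ^ 2 + d₁ * u x y + d₀) * deriv (fun x' => u x' y) x +
        l0 * deriv (fun y' => u x y') y +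
        (-2 * a₀ ^ 2 * c₁ + a₀ * d₁) * (u x y) ^ 2 + k₁ * u x y) :
    ∀ δ₁ δ₂ : ℝ, ∀ x y : ℝ,
      K (fun x₁ x₂ => δ₁ * exp (-a₀ * x₁) + δ₂ * exp (-(a₀ * x₁ + b₁ * x₂))) x y =
        (a₀ ^ 2 * c₀ - d₀ * a₀ + k₁) * δ₁ * exp (-a₀ * x) +
        (k₁ + b0 * b₁ ^ 2 - l0 * b₁ + c₀ * a₀ ^ 2 - a₀ * d₀) * δ₂ *
          exp (-(a₀ * x + b₁ * y)) :=
  stmt1_general a₀ b₁ c₀ c₁ d₀ d₁ d₂ b0 l0 k₁ K hK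
end

section
/- Let K[u] = ∂/∂x₁((c₂u² + c₀)∂u/∂x₁) + β₀ ∂²u/∂x₂² + (3a₀c₂u² + d₁u + d₀)∂u/∂x₁ + a₀d₁u² + k₁u. Then for all real ν₁, ν₂, the function u = e^{−a₀x₁}(ν₁ sin(√b₀ x₂) + ν₂ cos(√b₀ x₂)) with b₀ > 0 satisfies K[u] = (a₀²c₀ − b₀β₀ − a₀d₀ + k₁) u. In particular span{e^{−a₀x₁} sin(√b₀ x₂), e^{−a₀x₁} cos(√b₀ x₂)} is invariant under K, and every element of this span is an eigenfunction of K with eigenvalue a₀²c₀ − b₀β₀ − a₀d₀ + k₁. -/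
/-!
On `u = e^{-a₀x₁} T(x₂)` with `T'' = -b₀ T` we have `∂₁u = -a₀ u`, so the diffusion term
`∂₁((c₂u² + c₀)∂₁u)` equals `a₀²(3c₂u² + c₀) u`. The convection term contributes
`-a₀(3a₀c₂u² + d₁u + d₀) u`, which cancels the cubic part `3a₀²c₂u³` and, together with
`a₀d₁u²`, the quadratic part; what remains is linear in `u`.
-/

open Real

lemma hasDerivAt_exp_neg_mul_mul (a C x : ℝ) :
    HasDerivAt (fun x => exp (-a * x) * C) (-a * (exp (-a * x) * C)) x :=
  (((hasDerivAt_id' x).const_mul (-a)).exp.mul_const C).congr_deriv (by ring)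

lemma deriv_flux_of_hasDerivAt_neg_mul {g : ℝ → ℝ} {a : ℝ} (c₂ c₀ : ℝ)
    (hg : ∀ x, HasDerivAt g (-a * g x) x) (x : ℝ) :
    deriv (fun x => (c₂ * g x ^ 2 + c₀) * deriv g x) x =
      a ^ 2 * (3 * c₂ * g x ^ 2 + c₀) * g x := by
  have hg' : deriv g = fun x => -a * g x := funext fun x => (hg x).deriv
  rw [hg']
  have := ((((hg x).fun_pow 2).const_mul c₂).add_const c₀).fun_mul ((hg x).const_mul (-a))
  rw [this.deriv]
  ring

lemma hasDerivAt_const_mul_sin_add_cos (C ν₁ ν₂ s y : ℝ) :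
    HasDerivAt (fun y => C * (ν₁ * sin (s * y) + ν₂ * cos (s * y)))
      (s * (C * (-ν₂ * sin (s * y) + ν₁ * cos (s * y)))) y := by
  have hs : HasDerivAt (fun y => s * y) s y := by
    simpa using (hasDerivAt_id y).const_mul s
  exact (((hs.sin.const_mul ν₁).fun_add (hs.cos.const_mul ν₂)).const_mul C).congr_deriv (by ring)

lemma deriv_deriv_const_mul_sin_add_cos (C ν₁ ν₂ s y : ℝ) :
    deriv (fun y => deriv (fun y => C * (ν₁ * sin (s * y) + ν₂ * cos (s * y))) y) y =
      -s ^ 2 * (C * (ν₁ * sin (s * y) + ν₂ * cos (s * y))) := by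
  rw [funext fun y => (hasDerivAt_const_mul_sin_add_cos C ν₁ ν₂ s y).deriv,
    ((hasDerivAt_const_mul_sin_add_cos C (-ν₂) ν₁ s y).const_mul s).deriv]
  ring

/-- every element of the trigonometric-exponential subspace
`span{e^{−a₀x₁}sin(√b₀ x₂), e^{−a₀x₁}cos(√b₀ x₂)}` (b₀ > 0) is an
eigenfunction of the cubic operator K with eigenvalue
`a₀²c₀ − b₀β₀ − a₀d₀ + k₁`. -/
theorem stmt2 (a₀ b₀ c₀ c₂ b0 d₀ d₁ k₁ : ℝ) (hb₀ : 0 < b₀)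
    (K : (ℝ → ℝ → ℝ) → ℝ → ℝ → ℝ)
    (hK : ∀ u : ℝ → ℝ → ℝ, ∀ x y : ℝ,
      K u x y =
        deriv (fun x' => (c₂ * (u x' y) ^ 2 + c₀) *
          deriv (fun x'' => u x'' y) x') x +
        b0 * deriv (fun y' => deriv (fun y'' => u x y'') y') y +
        (3 * a₀ * c₂ * (u x y) ^ 2 + d₁ * u x y + d₀) *
          deriv (fun x' => u x' y) x +
        a₀ * d₁ * (u x y) ^ 2 + k₁ * u x y) :
    ∀ ν₁ ν₂ : ℝ, ∀ x y : ℝ,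
      K (fun x₁ x₂ => exp (-a₀ * x₁) *
          (ν₁ * sin (Real.sqrt b₀ * x₂) + ν₂ * cos (Real.sqrt b₀ * x₂))) x y =
        (a₀ ^ 2 * c₀ - b₀ * b0 - a₀ * d₀ + k₁) *
          (exp (-a₀ * x) *
            (ν₁ * sin (Real.sqrt b₀ * y) + ν₂ * cos (Real.sqrt b₀ * y))) := by
  intro ν₁ ν₂ x y
  set T := ν₁ * sin (√b₀ * y) + ν₂ * cos (√b₀ * y)
  have hu := hasDerivAt_exp_neg_mul_mul a₀ T
  rw [hK, deriv_flux_of_hasDerivAt_neg_mul c₂ c₀ hu, (hu x).deriv,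
    deriv_deriv_const_mul_sin_add_cos, Real.sq_sqrt hb₀.le]
  ring
end

section
/- Let K[u] = ∂/∂x₁((A u² + B u + c₀)∂u/∂x₁) + ∂/∂x₂((β₂u² + β₁u + β₀)∂u/∂x₂) + (d₂u² + d₁u + d₀)∂u/∂x₁ + (λ₂u² + λ₁u + λ₀)∂u/∂x₂ + k₂u² + k₁u, where A = (−3b₀²β₂ + a₀d₂ + b₀λ₂)/(3a₀²) and B = (−2b₀²β₁ + a₀d₁ + b₀λ₁ − k₂)/(2a₀²), with a₀ ≠ 0. Then for every ν ∈ ℝ, u = ν e^{−(a₀x₁ + b₀x₂)} satisfies K[u] = (a₀²c₀ + b₀²β₀ − λ₀b₀ − d₀a₀ + k₁) u, so the one-dimensional space span{e^{−(a₀x₁+b₀x₂)}} is invariant under K. -/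
/-!
Along the exponential `u = ν e^{-(a₀x₁ + b₀x₂)}` the partial derivatives act as multiplication
by `-a₀` and `-b₀`, so `K[u]` is a cubic polynomial in `u` with no constant term. The prescribed
values of `A` and `B` are exactly those that make its `u³` and `u²` coefficients vanish.
-/

open Real

theorem deriv_quadratic_mul_deriv_of_hasDerivAt_const_mul {f : ℝ → ℝ} {k : ℝ}
    (hf : ∀ s, HasDerivAt f (k * f s) s) (P Q R t : ℝ) :
    deriv (fun s => (P * f s ^ 2 + Q * f s + R) * deriv f s) t =
      k ^ 2 * (3 * P * f t ^ 3 + 2 * Q * f t ^ 2 + R * f t) := by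
  have hderiv : deriv f = fun s => k * f s := funext fun s => (hf s).deriv
  have hflux := ((((hf t).pow 2).const_mul P).add ((hf t).const_mul Q)).add_const R
    |>.mul ((hf t).const_mul k)
  rw [hderiv]
  exact hflux.deriv.trans (by simp only [Pi.add_apply, Pi.pow_apply]; ring)

theorem hasDerivAt_mul_exp_neg_affine_fst (ν a b y x : ℝ) :
    HasDerivAt (fun x' => ν * exp (-(a * x' + b * y)))
      (-a * (ν * exp (-(a * x + b * y)))) x := by
  have hexponent : HasDerivAt (fun x' => -(a * x' + b * y)) (-(a * 1)) x :=
    (((hasDerivAt_id' x).const_mul a).add_const (b * y)).neg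
  exact (hexponent.exp.const_mul ν).congr_deriv (by ring)

theorem hasDerivAt_mul_exp_neg_affine_snd (ν a b x y : ℝ) :
    HasDerivAt (fun y' => ν * exp (-(a * x + b * y')))
      (-b * (ν * exp (-(a * x + b * y)))) y := by
  have hexponent : HasDerivAt (fun y' => -(a * x + b * y')) (-(b * 1)) y :=
    (((hasDerivAt_id' y).const_mul b).const_add (a * x)).neg
  exact (hexponent.exp.const_mul ν).congr_deriv (by ring)

/-- with the constrained diffusion coefficients, the
one-dimensional space `span{e^{−(a₀x₁+b₀x₂)}}` is invariant under the cubic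
operator K, which acts on it as multiplication by
`a₀²c₀ + b₀²β₀ − λ₀b₀ − d₀a₀ + k₁`. -/
theorem stmt3 (a₀ b₀ c₀ b0 b1 b2 d₀ d₁ d₂ l0 l1 l2 k₁ k₂ : ℝ) (ha₀ : a₀ ≠ 0)
    (A B : ℝ)
    (hA : A = (-3 * b₀ ^ 2 * b2 + a₀ * d₂ + b₀ * l2) / (3 * a₀ ^ 2))
    (hB : B = (-2 * b₀ ^ 2 * b1 + a₀ * d₁ + b₀ * l1 - k₂) / (2 * a₀ ^ 2))
    (K : (ℝ → ℝ → ℝ) → ℝ → ℝ → ℝ)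
    (hK : ∀ u : ℝ → ℝ → ℝ, ∀ x y : ℝ,
      K u x y =
        deriv (fun x' => (A * (u x' y) ^ 2 + B * u x' y + c₀) *
          deriv (fun x'' => u x'' y) x') x +
        deriv (fun y' => (b2 * (u x y') ^ 2 + b1 * u x y' + b0) *
          deriv (fun y'' => u x y'') y') y +
        (d₂ * (u x y) ^ 2 + d₁ * u x y + d₀) * deriv (fun x' => u x' y) x +
        (l2 * (u x y) ^ 2 + l1 * u x y + l0) * deriv (fun y' => u x y') y +
        k₂ * (u x y) ^ 2 + k₁ * u x y) :
    ∀ ν : ℝ, ∀ x y : ℝ,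
      K (fun x₁ x₂ => ν * exp (-(a₀ * x₁ + b₀ * x₂))) x y =
        (a₀ ^ 2 * c₀ + b₀ ^ 2 * b0 - l0 * b₀ - d₀ * a₀ + k₁) *
          (ν * exp (-(a₀ * x + b₀ * y))) := by
  intro ν x y
  have hx := fun s => hasDerivAt_mul_exp_neg_affine_fst ν a₀ b₀ y s
  have hy := fun s => hasDerivAt_mul_exp_neg_affine_snd ν a₀ b₀ x s
  rw [hK, deriv_quadratic_mul_deriv_of_hasDerivAt_const_mul hx,
    deriv_quadratic_mul_deriv_of_hasDerivAt_const_mul hy, (hx x).deriv, (hy y).deriv]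
  have hA' : 3 * a₀ ^ 2 * A = -3 * b₀ ^ 2 * b2 + a₀ * d₂ + b₀ * l2 := by
    rw [hA]; field_simp
  have hB' : 2 * a₀ ^ 2 * B = -2 * b₀ ^ 2 * b1 + a₀ * d₁ + b₀ * l1 - k₂ := by
    rw [hB]; field_simp
  linear_combination (ν * exp (-(a₀ * x + b₀ * y))) ^ 3 * hA' +
    (ν * exp (-(a₀ * x + b₀ * y))) ^ 2 * hB'
end

section
/- Let K[u] = c₀ ∂²u/∂x₁² + ∂/∂x₂((λ₂/(3b₀) u² + β₁u + β₀)∂u/∂x₂) + d₀ ∂u/∂x₁ + (λ₂u² + λ₁u + λ₀)∂u/∂x₂ + (b₀λ₁ − 2b₀²β₁)u² + k₁u with b₀ ≠ 0. Then for all real ν₁, ν₂: K[ν₁e^{−b₀x₂} + ν₂e^{−(a₁x₁ + b₀x₂)}] = (b₀²β₀ − λ₀b₀ + k₁)ν₁e^{−b₀x₂} + (k₁ + β₀b₀² − λ₀b₀ + c₀a₁² − a₁d₀)ν₂e^{−(a₁x₁ + b₀x₂)}, so span{e^{−b₀x₂}, e^{−(a₁x₁+b₀x₂)}} is invariant under K.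 -/
open Real

/-! Both basis functions are eigenfunctions of `∂/∂x₂` with eigenvalue `-b₀`, so on their span
`u_{x₂} = -b₀ u`. Hence every `x₂`-term of `K[u]` is a polynomial in `u`: the cubic terms
cancel because of the factor `1 / (3 b₀)`, the quadratic ones because of the coefficient
`b₀λ₁ - 2b₀²β₁`, and only linear terms survive. In `x₁` only the second basis function varies. -/

theorem hasDerivAt_const_add_mul_exp_neg_affine (A B a b t : ℝ) :
    HasDerivAt (fun s => A + B * exp (-(a * s + b))) (-a * (B * exp (-(a * t + b)))) t := by
  have hlin : HasDerivAt (fun s => -(a * s + b)) (-a) t := by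
    simpa using (((hasDerivAt_id t).const_mul a).add_const b).fun_neg
  exact ((hlin.exp.const_mul B).const_add A).congr_deriv (by ring)

theorem deriv_deriv_const_add_mul_exp_neg_affine (A B a b t : ℝ) :
    deriv (fun s => deriv (fun s' => A + B * exp (-(a * s' + b))) s) t =
      a ^ 2 * (B * exp (-(a * t + b))) := by
  have hderiv : deriv (fun s' => A + B * exp (-(a * s' + b))) =
      fun s => 0 + -a * B * exp (-(a * s + b)) :=
    funext fun s => by
      rw [(hasDerivAt_const_add_mul_exp_neg_affine A B a b s).deriv]
      ring
  rw [hderiv, (hasDerivAt_const_add_mul_exp_neg_affine 0 (-a * B) a b t).deriv]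
  ring

theorem hasDerivAt_add_mul_exp_neg_mul (ν₁ ν₂ b c t : ℝ) :
    HasDerivAt (fun s => ν₁ * exp (-b * s) + ν₂ * exp (-(c + b * s)))
      (-b * (ν₁ * exp (-b * t) + ν₂ * exp (-(c + b * t)))) t := by
  have h₁ : HasDerivAt (fun s => -b * s) (-b) t := by
    simpa using (hasDerivAt_id t).const_mul (-b)
  have h₂ : HasDerivAt (fun s => -(c + b * s)) (-b) t := by
    simpa using (((hasDerivAt_id t).const_mul b).const_add c).fun_neg
  exact ((h₁.exp.const_mul ν₁).fun_add (h₂.exp.const_mul ν₂)).congr_deriv (by ring)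

theorem deriv_quadratic_mul_deriv_of_hasDerivAt_mul_self {f : ℝ → ℝ} {c : ℝ}
    (hf : ∀ t, HasDerivAt f (c * f t) t) (α β γ t : ℝ) :
    deriv (fun s => (α * f s ^ 2 + β * f s + γ) * deriv f s) t =
      c ^ 2 * (3 * α * f t ^ 2 + 2 * β * f t + γ) * f t := by
  have hquad : HasDerivAt (fun s => α * f s ^ 2 + β * f s + γ)
      (α * (2 * f t * (c * f t)) + β * (c * f t)) t :=
    ((((hf t).fun_pow 2).const_mul α).fun_add ((hf t).const_mul β)).add_const γ
      |>.congr_deriv (by push_cast; ring)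
  rw [show deriv f = fun s => c * f s from funext fun s => (hf s).deriv,
    (hquad.fun_mul ((hf t).const_mul c)).deriv]
  ring

/-- the cubic operator K leaves `span{e^{−b₀x₂}, e^{−(a₁x₁+b₀x₂)}}`
invariant, acting diagonally with the stated eigenvalues. -/
theorem stmt4 (a₁ b₀ c₀ b0 b1 l0 l1 l2 d₀ k₁ : ℝ) (hb₀ : b₀ ≠ 0)
    (K : (ℝ → ℝ → ℝ) → ℝ → ℝ → ℝ)
    (hK : ∀ u : ℝ → ℝ → ℝ, ∀ x y : ℝ,
      K u x y =
        c₀ * deriv (fun x' => deriv (fun x'' => u x'' y) x') x +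
        deriv (fun y' => (l2 / (3 * b₀) * (u x y') ^ 2 + b1 * u x y' + b0) *
          deriv (fun y'' => u x y'') y') y +
        d₀ * deriv (fun x' => u x' y) x +
        (l2 * (u x y) ^ 2 + l1 * u x y + l0) * deriv (fun y' => u x y') y +
        (b₀ * l1 - 2 * b₀ ^ 2 * b1) * (u x y) ^ 2 + k₁ * u x y) :
    ∀ ν₁ ν₂ : ℝ, ∀ x y : ℝ,
      K (fun x₁ x₂ => ν₁ * exp (-b₀ * x₂) + ν₂ * exp (-(a₁ * x₁ + b₀ * x₂))) x y =
        (b₀ ^ 2 * b0 - l0 * b₀ + k₁) * ν₁ * exp (-b₀ * y) +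
        (k₁ + b0 * b₀ ^ 2 - l0 * b₀ + c₀ * a₁ ^ 2 - a₁ * d₀) * ν₂ *
          exp (-(a₁ * x + b₀ * y)) := by
  intro ν₁ ν₂ x y
  have hy := hasDerivAt_add_mul_exp_neg_mul ν₁ ν₂ b₀ (a₁ * x)
  rw [hK, deriv_deriv_const_add_mul_exp_neg_affine,
    (hasDerivAt_const_add_mul_exp_neg_affine _ ν₂ a₁ (b₀ * y) x).deriv,
    deriv_quadratic_mul_deriv_of_hasDerivAt_mul_self hy, (hy y).deriv]
  field_simp
  ring
end

section
/- Let K[u] = c₀ ∂²u/∂x₁² + ∂/∂x₂((β₂u² + β₁u + β₀)∂u/∂x₂) + (3b₀β₂u² + λ₁u + λ₀)∂u/∂x₂ + (b₀λ₁ − 2b₀²β₁)u² + k₁u. Then for all real ν₁, ν₂ and a₀ > 0, the function u = e^{−b₀x₂}(ν₁ sin(√a₀ x₁) + ν₂ cos(√a₀ x₁)) satisfies K[u] = (−a₀c₀ + b₀²β₀ − b₀λ₀ + k₁) u. -/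
/-!
Along `x₂` the function `u` satisfies `∂u/∂x₂ = -b₀ u`, so the flux term equals
`b₀² (3β₂u³ + 2β₁u² + β₀u)`; its cubic and quadratic parts cancel against the lower-order
terms of `K`. Along `x₁` we have `∂²u/∂x₁² = -a₀ u`, so only multiples of `u` survive.
-/

open Real

theorem deriv_deriv_sin_add_cos (c ν₁ ν₂ x : ℝ) :
    deriv (deriv fun t => ν₁ * sin (c * t) + ν₂ * cos (c * t)) x =
      -c ^ 2 * (ν₁ * sin (c * x) + ν₂ * cos (c * x)) := by
  have hlin (t : ℝ) : HasDerivAt (fun s => c * s) c t := by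
    simpa using (hasDerivAt_id t).const_mul c
  have hfirst : deriv (fun t => ν₁ * sin (c * t) + ν₂ * cos (c * t)) =
      fun t => c * (ν₁ * cos (c * t) - ν₂ * sin (c * t)) := funext fun t =>
    ((((hlin t).sin.const_mul ν₁).add ((hlin t).cos.const_mul ν₂)).congr_deriv (by ring)).deriv
  rw [hfirst]
  exact (((((hlin x).cos.const_mul ν₁).sub ((hlin x).sin.const_mul ν₂)).const_mul c).congr_deriv
    (by ring)).deriv

theorem hasDerivAt_exp_neg_mul_mul_s5 (b A t : ℝ) :
    HasDerivAt (fun s => exp (-b * s) * A) (-b * (exp (-b * t) * A)) t :=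
  (((hasDerivAt_id' t).const_mul (-b)).exp.mul_const A).congr_deriv (by ring)

theorem deriv_quadratic_mul_deriv_of_hasDerivAt_neg_mul {v : ℝ → ℝ} {b : ℝ}
    (hv : ∀ t, HasDerivAt v (-b * v t) t) (β₀ β₁ β₂ y : ℝ) :
    deriv (fun t => (β₂ * v t ^ 2 + β₁ * v t + β₀) * deriv v t) y =
      b ^ 2 * (3 * β₂ * v y ^ 3 + 2 * β₁ * v y ^ 2 + β₀ * v y) := by
  have hdv : deriv v = fun t => -b * v t := funext fun t => (hv t).deriv
  rw [hdv]
  have hflux := ((((hv y).fun_pow 2).const_mul β₂).fun_add ((hv y).const_mul β₁)).add_const β₀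
    |>.fun_mul ((hv y).const_mul (-b))
  exact (hflux.congr_deriv (by ring)).deriv

/-- every element of `e^{−b₀x₂}·span{sin(√a₀x₁), cos(√a₀x₁)}`
(a₀ > 0) is an eigenfunction of the cubic operator K with eigenvalue
`−a₀c₀ + b₀²β₀ − b₀λ₀ + k₁`. -/
theorem stmt5 (a₀ b₀ c₀ b0 b1 b2 l0 l1 k₁ : ℝ) (ha₀ : 0 < a₀)
    (K : (ℝ → ℝ → ℝ) → ℝ → ℝ → ℝ)
    (hK : ∀ u : ℝ → ℝ → ℝ, ∀ x y : ℝ,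
      K u x y =
        c₀ * deriv (fun x' => deriv (fun x'' => u x'' y) x') x +
        deriv (fun y' => (b2 * (u x y') ^ 2 + b1 * u x y' + b0) *
          deriv (fun y'' => u x y'') y') y +
        (3 * b₀ * b2 * (u x y) ^ 2 + l1 * u x y + l0) *
          deriv (fun y' => u x y') y +
        (b₀ * l1 - 2 * b₀ ^ 2 * b1) * (u x y) ^ 2 + k₁ * u x y) :
    ∀ ν₁ ν₂ : ℝ, ∀ x y : ℝ,
      K (fun x₁ x₂ => exp (-b₀ * x₂) *
          (ν₁ * sin (Real.sqrt a₀ * x₁) + ν₂ * cos (Real.sqrt a₀ * x₁))) x y =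
        (-a₀ * c₀ + b₀ ^ 2 * b0 - b₀ * l0 + k₁) *
          (exp (-b₀ * y) *
            (ν₁ * sin (Real.sqrt a₀ * x) + ν₂ * cos (Real.sqrt a₀ * x))) := by
  intro ν₁ ν₂ x y
  set S : ℝ → ℝ := fun t => ν₁ * sin (√a₀ * t) + ν₂ * cos (√a₀ * t) with hS
  have hv := hasDerivAt_exp_neg_mul_mul_s5 b₀ (S x)
  have hxx : deriv (fun x' => deriv (fun x'' => exp (-b₀ * y) * S x'') x') x =
      exp (-b₀ * y) * (-a₀ * S x) := by
    simp only [deriv_const_mul_field']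
    rw [hS, deriv_deriv_sin_add_cos, sq_sqrt ha₀.le]
  rw [hK, hxx, deriv_quadratic_mul_deriv_of_hasDerivAt_neg_mul hv, (hv y).deriv]
  ring
end

section
/- Let γ ∈ ℝ and define the Mittag-Leffler function E_{α,1}(z) = Σ_{m=0}^∞ z^m / Γ(mα + 1). For α = 1, the function Φ(t) = ν E_{1,1}(γt) = ν e^{γt} satisfies Φ'(t) = γΦ(t) and Φ(0) = ν; consequently, with γ₁ = a₀²c₀ − d₀a₀ + k₁ and γ₂ = k₁ + β₀b₁² − λ₀b₁ + c₀a₀² − a₀d₀, the function u(x₁,x₂,t) = ν₁e^{−a₀x₁}e^{γ₁t} + ν₂e^{−(a₀x₁+b₁x₂)}e^{γ₂t} solves ∂u/∂t = K[u] with K the operator K[u] = (d₂/(3a₀)u² + c₁u + c₀)∂²u/∂x₁² + (2d₂/(3a₀)u + c₁)(∂u/∂x₁)² + β₀∂²u/∂x₂² + (d₂u² + d₁u + d₀)∂u/∂x₁ + λ₀∂u/∂x₂ + (−2a₀²c₁ + a₀d₁)u² + k₁u, and satisfies u(x₁,x₂,0) = ν₁e^{−a₀x₁} + ν₂e^{−(a₀x₁+b₁x₂)}.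 -/
/-!
Both terms of `u` are exponential in `x₁` with rate `-a₀`, so `∂u/∂x₁ = -a₀ u` and
`∂²u/∂x₁² = a₀² u`; in `x₂` only the second term varies, again exponentially. Substituting
these into `K[u]` turns it into a polynomial in `u` whose cubic terms
(`d₂a₀/3 + 2d₂a₀/3 - d₂a₀`) and quadratic terms (`2a₀²c₁ - a₀d₁ - 2a₀²c₁ + a₀d₁`) cancel, leaving
`γ₁` and `γ₂` times the two terms, which is exactly their time derivative.
-/

open Real

theorem hasDerivAt_const_mul_exp_mul (c k x : ℝ) :
    HasDerivAt (fun s => c * exp (k * s)) (k * (c * exp (k * x))) x := by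
  have h := (((hasDerivAt_id' x).const_mul k).exp).const_mul c
  rw [mul_one] at h
  exact h.congr_deriv (by ring)

theorem deriv_const_mul_exp_mul (c k : ℝ) :
    deriv (fun s => c * exp (k * s)) = fun x => k * (c * exp (k * x)) :=
  funext fun x => (hasDerivAt_const_mul_exp_mul c k x).deriv

theorem div_mul_mul_sq (d b a : ℝ) : d / (b * a) * a ^ 2 = d / b * a :=
  calc d / (b * a) * a ^ 2 = d / b * (a * a / a) := by ring
    _ = d / b * a := by rw [mul_self_div_self]

noncomputable def cubicOperator (a₀ c₀ c₁ d₀ d₁ d₂ β₀ l₀ k₁ : ℝ) (u : ℝ → ℝ → ℝ)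
    (x y : ℝ) : ℝ :=
  (d₂ / (3 * a₀) * (u x y) ^ 2 + c₁ * u x y + c₀) *
    deriv (fun x' => deriv (fun x'' => u x'' y) x') x +
  (2 * d₂ / (3 * a₀) * u x y + c₁) * (deriv (fun x' => u x' y) x) ^ 2 +
  β₀ * deriv (fun y' => deriv (fun y'' => u x y'') y') y +
  (d₂ * (u x y) ^ 2 + d₁ * u x y + d₀) * deriv (fun x' => u x' y) x +
  l₀ * deriv (fun y' => u x y') y +
  (-2 * a₀ ^ 2 * c₁ + a₀ * d₁) * (u x y) ^ 2 + k₁ * u x y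

/-- The solution frozen at a time `t`, with `T₁ = e^{γ₁t}` and `T₂ = e^{γ₂t}`. -/
noncomputable def expProfile (a₀ b₁ ν₁ ν₂ T₁ T₂ : ℝ) (x₁ x₂ : ℝ) : ℝ :=
  ν₁ * exp (-a₀ * x₁) * T₁ + ν₂ * exp (-(a₀ * x₁ + b₁ * x₂)) * T₂

namespace expProfile

variable (a₀ b₁ ν₁ ν₂ T₁ T₂ : ℝ)

theorem eq_mul_exp_fst (x₁ x₂ : ℝ) :
    expProfile a₀ b₁ ν₁ ν₂ T₁ T₂ x₁ x₂ =
      (ν₁ * T₁ + ν₂ * exp (-b₁ * x₂) * T₂) * exp (-a₀ * x₁) := by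
  simp only [expProfile, neg_add, neg_mul, exp_add]
  ring

theorem eq_add_mul_exp_snd (x₁ x₂ : ℝ) :
    expProfile a₀ b₁ ν₁ ν₂ T₁ T₂ x₁ x₂ =
      ν₁ * exp (-a₀ * x₁) * T₁ + ν₂ * exp (-a₀ * x₁) * T₂ * exp (-b₁ * x₂) := by
  simp only [expProfile, neg_add, neg_mul, exp_add]
  ring

theorem deriv_fst (x₂ : ℝ) :
    deriv (fun x₁ => expProfile a₀ b₁ ν₁ ν₂ T₁ T₂ x₁ x₂) =
      fun x₁ => -a₀ * expProfile a₀ b₁ ν₁ ν₂ T₁ T₂ x₁ x₂ := by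
  simp only [eq_mul_exp_fst]
  exact deriv_const_mul_exp_mul _ _

theorem deriv_snd (x₁ : ℝ) :
    deriv (fun x₂ => expProfile a₀ b₁ ν₁ ν₂ T₁ T₂ x₁ x₂) =
      fun x₂ => -b₁ * (ν₂ * exp (-a₀ * x₁) * T₂ * exp (-b₁ * x₂)) := by
  simp only [eq_add_mul_exp_snd, deriv_const_add', deriv_const_mul_exp_mul]

theorem cubicOperator_eq (c₀ c₁ d₀ d₁ d₂ β₀ l₀ k₁ x y : ℝ) :
    cubicOperator a₀ c₀ c₁ d₀ d₁ d₂ β₀ l₀ k₁ (expProfile a₀ b₁ ν₁ ν₂ T₁ T₂) x y =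
      (a₀ ^ 2 * c₀ - d₀ * a₀ + k₁) * (ν₁ * exp (-a₀ * x) * T₁) +
        (k₁ + β₀ * b₁ ^ 2 - l₀ * b₁ + c₀ * a₀ ^ 2 - a₀ * d₀) *
          (ν₂ * exp (-(a₀ * x + b₁ * y)) * T₂) := by
  have hmode₂ :
      ν₂ * exp (-(a₀ * x + b₁ * y)) * T₂ = ν₂ * exp (-a₀ * x) * T₂ * exp (-b₁ * y) := by
    simp only [neg_add, neg_mul, exp_add]
    ring
  rw [cubicOperator, deriv_fst, deriv_const_mul_field', deriv_fst, deriv_snd,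
    deriv_const_mul_field', deriv_const_mul_exp_mul]
  beta_reduce
  rw [eq_add_mul_exp_snd, hmode₂]
  generalize ν₁ * exp (-a₀ * x) * T₁ = p
  generalize ν₂ * exp (-a₀ * x) * T₂ * exp (-b₁ * y) = q
  linear_combination 3 * (p + q) ^ 3 * div_mul_mul_sq d₂ 3 a₀

end expProfile

theorem stmt8_general (a₀ b₁ c₀ c₁ d₀ d₁ d₂ b0 l0 k₁ ν₁ ν₂ : ℝ)
    (γ₁ γ₂ : ℝ)
    (hγ₁ : γ₁ = a₀ ^ 2 * c₀ - d₀ * a₀ + k₁)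
    (hγ₂ : γ₂ = k₁ + b0 * b₁ ^ 2 - l0 * b₁ + c₀ * a₀ ^ 2 - a₀ * d₀)
    (K : (ℝ → ℝ → ℝ) → ℝ → ℝ → ℝ)
    (hK : ∀ u : ℝ → ℝ → ℝ, ∀ x y : ℝ,
      K u x y =
        (d₂ / (3 * a₀) * (u x y) ^ 2 + c₁ * u x y + c₀) *
          deriv (fun x' => deriv (fun x'' => u x'' y) x') x +
        (2 * d₂ / (3 * a₀) * u x y + c₁) * (deriv (fun x' => u x' y) x) ^ 2 +
        b0 * deriv (fun y' => deriv (fun y'' => u x y'') y') y +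
        (d₂ * (u x y) ^ 2 + d₁ * u x y + d₀) * deriv (fun x' => u x' y) x +
        l0 * deriv (fun y' => u x y') y +
        (-2 * a₀ ^ 2 * c₁ + a₀ * d₁) * (u x y) ^ 2 + k₁ * u x y) :
    (∀ ν γ : ℝ, (∀ t : ℝ, HasDerivAt (fun s => ν * exp (γ * s))
        (γ * (ν * exp (γ * t))) t) ∧ ν * exp (γ * 0) = ν) ∧
    (∀ x y t : ℝ,
      HasDerivAt (fun s => ν₁ * exp (-a₀ * x) * exp (γ₁ * s) +
          ν₂ * exp (-(a₀ * x + b₁ * y)) * exp (γ₂ * s))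
        (K (fun x₁ x₂ => ν₁ * exp (-a₀ * x₁) * exp (γ₁ * t) +
          ν₂ * exp (-(a₀ * x₁ + b₁ * x₂)) * exp (γ₂ * t)) x y) t) ∧
    (∀ x y : ℝ,
      ν₁ * exp (-a₀ * x) * exp (γ₁ * 0) +
        ν₂ * exp (-(a₀ * x + b₁ * y)) * exp (γ₂ * 0) =
      ν₁ * exp (-a₀ * x) + ν₂ * exp (-(a₀ * x + b₁ * y))) := by
  refine ⟨fun ν γ => ⟨hasDerivAt_const_mul_exp_mul ν γ, by simp⟩, fun x y t => ?_,
    fun x y => by simp⟩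
  have hKu : K (expProfile a₀ b₁ ν₁ ν₂ (exp (γ₁ * t)) (exp (γ₂ * t))) x y =
      γ₁ * (ν₁ * exp (-a₀ * x) * exp (γ₁ * t)) +
        γ₂ * (ν₂ * exp (-(a₀ * x + b₁ * y)) * exp (γ₂ * t)) := by
    rw [hγ₁, hγ₂, ← expProfile.cubicOperator_eq a₀ b₁ ν₁ ν₂]
    exact hK _ x y
  exact hKu ▸
    (hasDerivAt_const_mul_exp_mul _ γ₁ t).add (hasDerivAt_const_mul_exp_mul _ γ₂ t)

/-- for α = 1 the Mittag-Leffler solution reduces to exponentials: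
`Φ(t) = ν e^{γt}` satisfies `Φ' = γΦ`, `Φ(0) = ν`, and
`u = ν₁e^{−a₀x₁}e^{γ₁t} + ν₂e^{−(a₀x₁+b₁x₂)}e^{γ₂t}` solves `∂u/∂t = K[u]`
with the exponential initial profile. -/
theorem stmt8 (a₀ b₁ c₀ c₁ d₀ d₁ d₂ b0 l0 k₁ ν₁ ν₂ : ℝ) (ha₀ : a₀ ≠ 0)
    (γ₁ γ₂ : ℝ)
    (hγ₁ : γ₁ = a₀ ^ 2 * c₀ - d₀ * a₀ + k₁)
    (hγ₂ : γ₂ = k₁ + b0 * b₁ ^ 2 - l0 * b₁ + c₀ * a₀ ^ 2 - a₀ * d₀)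
    (K : (ℝ → ℝ → ℝ) → ℝ → ℝ → ℝ)
    (hK : ∀ u : ℝ → ℝ → ℝ, ∀ x y : ℝ,
      K u x y =
        (d₂ / (3 * a₀) * (u x y) ^ 2 + c₁ * u x y + c₀) *
          deriv (fun x' => deriv (fun x'' => u x'' y) x') x +
        (2 * d₂ / (3 * a₀) * u x y + c₁) * (deriv (fun x' => u x' y) x) ^ 2 +
        b0 * deriv (fun y' => deriv (fun y'' => u x y'') y') y +
        (d₂ * (u x y) ^ 2 + d₁ * u x y + d₀) * deriv (fun x' => u x' y) x +
        l0 * deriv (fun y' => u x y') y +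
        (-2 * a₀ ^ 2 * c₁ + a₀ * d₁) * (u x y) ^ 2 + k₁ * u x y) :
    (∀ ν γ : ℝ, (∀ t : ℝ, HasDerivAt (fun s => ν * exp (γ * s))
        (γ * (ν * exp (γ * t))) t) ∧ ν * exp (γ * 0) = ν) ∧
    (∀ x y t : ℝ,
      HasDerivAt (fun s => ν₁ * exp (-a₀ * x) * exp (γ₁ * s) +
          ν₂ * exp (-(a₀ * x + b₁ * y)) * exp (γ₂ * s))
        (K (fun x₁ x₂ => ν₁ * exp (-a₀ * x₁) * exp (γ₁ * t) +
          ν₂ * exp (-(a₀ * x₁ + b₁ * x₂)) * exp (γ₂ * t)) x y) t) ∧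
    (∀ x y : ℝ,
      ν₁ * exp (-a₀ * x) * exp (γ₁ * 0) +
        ν₂ * exp (-(a₀ * x + b₁ * y)) * exp (γ₂ * 0) =
      ν₁ * exp (-a₀ * x) + ν₂ * exp (-(a₀ * x + b₁ * y))) :=
  stmt8_general a₀ b₁ c₀ c₁ d₀ d₁ d₂ b0 l0 k₁ ν₁ ν₂ γ₁ γ₂ hγ₁ hγ₂ K hK
end

section
/- Let K[u] = ∂/∂x₁((c₁u + c₀)∂u/∂x₁) + β₀∂²u/∂x₂² + d₀∂u/∂x₁ + λ₀∂u/∂x₂ + k₁u + k₀. Then for b₁ > 0 and all real δ₁, δ₂, δ₃, δ₄, the function u = δ₁ + δ₂x₁ + δ₃sin(√b₁ x₂) + δ₄cos(√b₁ x₂) satisfies K[u] = (c₁δ₂² + d₀δ₂ + k₁δ₁ + k₀) + k₁δ₂x₁ + (−β₀b₁ + k₁)δ₃sin(√b₁x₂) + λ₀√b₁(δ₃cos(√b₁x₂) − δ₄sin(√b₁x₂)) + (−β₀b₁ + k₁)δ₄cos(√b₁x₂), so K[u] ∈ span{1, x₁, sin(√b₁x₂), cos(√b₁x₂)}. Hence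 span{1, x₁, sin(√b₁x₂), cos(√b₁x₂)} is invariant under K. -/
open Real

/-- the operator
`K[u] = ∂/∂x₁((c₁u+c₀)u_{x₁}) + β₀u_{x₂x₂} + d₀u_{x₁} + λ₀u_{x₂} + k₁u + k₀`
leaves `span{1, x₁, sin(√b₁x₂), cos(√b₁x₂)}` (b₁ > 0) invariant, with the
stated explicit image of `δ₁ + δ₂x₁ + δ₃sin(√b₁x₂) + δ₄cos(√b₁x₂)`. -/
theorem stmt15 (c₀ c₁ b0 d₀ l0 k₀ k₁ b₁ : ℝ) (hb₁ : 0 < b₁)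
    (K : (ℝ → ℝ → ℝ) → ℝ → ℝ → ℝ)
    (hK : ∀ u : ℝ → ℝ → ℝ, ∀ x y : ℝ,
      K u x y =
        deriv (fun x' => (c₁ * u x' y + c₀) * deriv (fun x'' => u x'' y) x') x +
        b0 * deriv (fun y' => deriv (fun y'' => u x y'') y') y +
        d₀ * deriv (fun x' => u x' y) x +
        l0 * deriv (fun y' => u x y') y + k₁ * u x y + k₀) :
    ∀ δ₁ δ₂ δ₃ δ₄ : ℝ,
      (∀ x y : ℝ,
        K (fun x₁ x₂ => δ₁ + δ₂ * x₁ + δ₃ * Real.sin (Real.sqrt b₁ * x₂) +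
            δ₄ * Real.cos (Real.sqrt b₁ * x₂)) x y =
          (c₁ * δ₂ ^ 2 + d₀ * δ₂ + k₁ * δ₁ + k₀) + k₁ * δ₂ * x +
          (-b0 * b₁ + k₁) * δ₃ * Real.sin (Real.sqrt b₁ * y) +
          l0 * Real.sqrt b₁ * (δ₃ * Real.cos (Real.sqrt b₁ * y) -
            δ₄ * Real.sin (Real.sqrt b₁ * y)) +
          (-b0 * b₁ + k₁) * δ₄ * Real.cos (Real.sqrt b₁ * y)) ∧
      (fun x y => K (fun x₁ x₂ => δ₁ + δ₂ * x₁ + δ₃ * Real.sin (Real.sqrt b₁ * x₂) +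
          δ₄ * Real.cos (Real.sqrt b₁ * x₂)) x y) ∈
        Submodule.span ℝ
          ({(fun _ _ => 1), (fun x _ => x),
            (fun _ y => Real.sin (Real.sqrt b₁ * y)),
            (fun _ y => Real.cos (Real.sqrt b₁ * y))} : Set (ℝ → ℝ → ℝ)) := by
  intro δ₁ δ₂ δ₃ δ₄
  set s := Real.sqrt b₁ with hs
  have hss : s * s = b₁ := Real.mul_self_sqrt hb₁.le
  -- derivative helpers
  have hsin : ∀ t : ℝ, HasDerivAt (fun y => Real.sin (s * y)) (Real.cos (s * t) * s) t := by
    intro t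
    have h1 : HasDerivAt (fun y : ℝ => s * y) s t := by
      simpa using (hasDerivAt_id t).const_mul s
    exact (Real.hasDerivAt_sin (s * t)).comp t h1
  have hcos : ∀ t : ℝ, HasDerivAt (fun y => Real.cos (s * y)) (-Real.sin (s * t) * s) t := by
    intro t
    have h1 : HasDerivAt (fun y : ℝ => s * y) s t := by
      simpa using (hasDerivAt_id t).const_mul s
    exact (Real.hasDerivAt_cos (s * t)).comp t h1
  -- derivative in x of u
  have hdx : ∀ y : ℝ,
      (deriv fun x'' => δ₁ + δ₂ * x'' + δ₃ * Real.sin (s * y) + δ₄ * Real.cos (s * y))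
        = fun _ => δ₂ := by
    intro y
    funext t
    have : HasDerivAt (fun x'' : ℝ => δ₁ + δ₂ * x'' + δ₃ * Real.sin (s * y)
        + δ₄ * Real.cos (s * y)) δ₂ t := by
      have h1 : HasDerivAt (fun x'' : ℝ => δ₂ * x'') δ₂ t := by
        simpa using (hasDerivAt_id t).const_mul δ₂
      simpa using ((h1.const_add δ₁).add_const (δ₃ * Real.sin (s * y))).add_const
        (δ₄ * Real.cos (s * y))
    exact this.deriv
  -- derivative in y of u
  have hUy : ∀ (x t : ℝ), HasDerivAt (fun y => δ₁ + δ₂ * x + δ₃ * Real.sin (s * y)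
      + δ₄ * Real.cos (s * y))
      (δ₃ * (Real.cos (s * t) * s) + δ₄ * (-Real.sin (s * t) * s)) t := by
    intro x t
    exact (((hsin t).const_mul δ₃).const_add (δ₁ + δ₂ * x)).add ((hcos t).const_mul δ₄)
  have hdy : ∀ x : ℝ,
      (deriv fun y'' => δ₁ + δ₂ * x + δ₃ * Real.sin (s * y'') + δ₄ * Real.cos (s * y''))
        = fun t => δ₃ * (Real.cos (s * t) * s) + δ₄ * (-Real.sin (s * t) * s) := by
    intro x; funext t
    have h := hUy x t
    have h' : (fun y => δ₁ + δ₂ * x + δ₃ * Real.sin (s * y) + δ₄ * Real.cos (s * y))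
        = fun y'' => δ₁ + δ₂ * x + δ₃ * Real.sin (s * y'') + δ₄ * Real.cos (s * y'') := rfl
    exact h.deriv
  -- second derivative in y
  have hUy2 : ∀ t : ℝ, HasDerivAt
      (fun y => δ₃ * (Real.cos (s * y) * s) + δ₄ * (-Real.sin (s * y) * s))
      (δ₃ * (-Real.sin (s * t) * s) * s + δ₄ * (-(Real.cos (s * t) * s)) * s) t := by
    intro t
    have h1 : HasDerivAt (fun y => δ₃ * (Real.cos (s * y) * s))
        (δ₃ * (-Real.sin (s * t) * s) * s) t := by
      have := ((hcos t).mul_const s).const_mul δ₃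
      simpa [mul_assoc] using this
    have h2 : HasDerivAt (fun y => δ₄ * (-Real.sin (s * y) * s))
        (δ₄ * (-(Real.cos (s * t) * s)) * s) t := by
      have := (((hsin t).neg).mul_const s).const_mul δ₄
      simpa [mul_assoc] using this
    exact h1.add h2
  -- main pointwise formula
  have hmain : ∀ x y : ℝ,
      K (fun x₁ x₂ => δ₁ + δ₂ * x₁ + δ₃ * Real.sin (s * x₂) + δ₄ * Real.cos (s * x₂)) x y =
        (c₁ * δ₂ ^ 2 + d₀ * δ₂ + k₁ * δ₁ + k₀) + k₁ * δ₂ * x +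
        (-b0 * b₁ + k₁) * δ₃ * Real.sin (s * y) +
        l0 * s * (δ₃ * Real.cos (s * y) - δ₄ * Real.sin (s * y)) +
        (-b0 * b₁ + k₁) * δ₄ * Real.cos (s * y) := by
    intro x y
    rw [hK]
    -- first term
    have t1 : deriv (fun x' => (c₁ * (δ₁ + δ₂ * x' + δ₃ * Real.sin (s * y)
        + δ₄ * Real.cos (s * y)) + c₀) *
        deriv (fun x'' => δ₁ + δ₂ * x'' + δ₃ * Real.sin (s * y) + δ₄ * Real.cos (s * y)) x') x
        = c₁ * δ₂ * δ₂ := by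
      have heq : (fun x' => (c₁ * (δ₁ + δ₂ * x' + δ₃ * Real.sin (s * y)
          + δ₄ * Real.cos (s * y)) + c₀) *
          deriv (fun x'' => δ₁ + δ₂ * x'' + δ₃ * Real.sin (s * y)
            + δ₄ * Real.cos (s * y)) x')
          = fun x' => (c₁ * δ₂ * δ₂) * x' +
            ((c₁ * (δ₁ + δ₃ * Real.sin (s * y) + δ₄ * Real.cos (s * y)) + c₀) * δ₂) := by
        funext x'
        rw [hdx y]
        ring
      rw [heq]
      have : HasDerivAt (fun x' : ℝ => (c₁ * δ₂ * δ₂) * x' +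
          ((c₁ * (δ₁ + δ₃ * Real.sin (s * y) + δ₄ * Real.cos (s * y)) + c₀) * δ₂))
          (c₁ * δ₂ * δ₂) x := by
        simpa using ((hasDerivAt_id x).const_mul (c₁ * δ₂ * δ₂)).add_const
          ((c₁ * (δ₁ + δ₃ * Real.sin (s * y) + δ₄ * Real.cos (s * y)) + c₀) * δ₂)
      exact this.deriv
    rw [t1, hdx y]
    -- second derivative term
    have t2 : deriv (fun y' => deriv (fun y'' => δ₁ + δ₂ * x + δ₃ * Real.sin (s * y'')
        + δ₄ * Real.cos (s * y'')) y') y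
        = δ₃ * (-Real.sin (s * y) * s) * s + δ₄ * (-(Real.cos (s * y) * s)) * s := by
      have heq : (fun y' => deriv (fun y'' => δ₁ + δ₂ * x + δ₃ * Real.sin (s * y'')
          + δ₄ * Real.cos (s * y'')) y')
          = fun t => δ₃ * (Real.cos (s * t) * s) + δ₄ * (-Real.sin (s * t) * s) := by
        funext t; rw [hdy x]
      rw [heq]
      exact (hUy2 y).deriv
    rw [t2, (hUy x y).deriv]
    simp only
    linear_combination (-b0 * δ₃ * Real.sin (s * y) - b0 * δ₄ * Real.cos (s * y)) * hss
  refine ⟨fun x y => hmain x y, ?_⟩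
  have hfun : (fun x y => K (fun x₁ x₂ => δ₁ + δ₂ * x₁ + δ₃ * Real.sin (s * x₂)
      + δ₄ * Real.cos (s * x₂)) x y)
      = (c₁ * δ₂ ^ 2 + d₀ * δ₂ + k₁ * δ₁ + k₀) • (fun _ _ => (1:ℝ))
        + (k₁ * δ₂) • (fun x _ => x)
        + ((-b0 * b₁ + k₁) * δ₃ + l0 * s * (-δ₄)) • (fun _ y => Real.sin (s * y))
        + ((-b0 * b₁ + k₁) * δ₄ + l0 * s * δ₃) • (fun _ y => Real.cos (s * y)) := by
    funext x y
    have := hmain x y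
    simp only [Pi.add_apply, Pi.smul_apply, smul_eq_mul]
    rw [this]; ring
  rw [hfun]
  have m1 : (fun (_ _ : ℝ) => (1:ℝ)) ∈ ({(fun _ _ => 1), (fun x _ => x),
      (fun _ y => Real.sin (s * y)), (fun _ y => Real.cos (s * y))} : Set (ℝ → ℝ → ℝ)) := by
    simp
  have m2 : (fun (x _ : ℝ) => x) ∈ ({(fun _ _ => 1), (fun x _ => x),
      (fun _ y => Real.sin (s * y)), (fun _ y => Real.cos (s * y))} : Set (ℝ → ℝ → ℝ)) := by
    simp
  have m3 : (fun (_ y : ℝ) => Real.sin (s * y)) ∈ ({(fun _ _ => 1), (fun x _ => x),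
      (fun _ y => Real.sin (s * y)), (fun _ y => Real.cos (s * y))} : Set (ℝ → ℝ → ℝ)) := by
    simp
  have m4 : (fun (_ y : ℝ) => Real.cos (s * y)) ∈ ({(fun _ _ => 1), (fun x _ => x),
      (fun _ y => Real.sin (s * y)), (fun _ y => Real.cos (s * y))} : Set (ℝ → ℝ → ℝ)) := by
    simp
  exact Submodule.add_mem _ (Submodule.add_mem _ (Submodule.add_mem _
    (Submodule.smul_mem _ _ (Submodule.subset_span m1))
    (Submodule.smul_mem _ _ (Submodule.subset_span m2)))
    (Submodule.smul_mem _ _ (Submodule.subset_span m3)))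
    (Submodule.smul_mem _ _ (Submodule.subset_span m4))
end
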